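/- arXiv:2409.08480 — 2 statements merged into one kernel-verified Lean document; each statement's English description precedes it below -/
import Mathlib

section
/- Let 0 < A₁ ≤ A₂ and σ ≥ 1. There exists a constant C > 0, depending only on σ and A₂/A₁, with the following property. Let T ⊂ ℝ² be a closed triangle with diameter h_T ≤ 1 and inradius ρ_T satisfying h_T ≤ σ ρ_T. Let L be a straight line that meets the interior of T and divides T into two open pieces T₁ and T₂, with unit normal n of L pointing from T₁ into T₂. Let w : T → ℝ be continuous, such that the restriction of w to the closure of each Tᵢ is an affine function, and such that the flux condition A₁ ∇(w|_{T₁}) · n = A₂ ∇(w|_{T₂}) · n holds. Then for every edge e of T, ∫_e ‖∇w‖² dH¹ ≤ C h_T^{-2} ∫_T ‖∇w‖² dx, where on e ∩ cl(Tᵢ) the gradient ∇w denotes the (constant) gradient of the affine piece w|_{Tᵢ}, the edge integral is with respect to the one-dimensional Hausdorff measure H¹, and the area integral is with respect to Lebesgue measure on ℝ². -/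
/-!
Both affine pieces coincide with `w` on `L ∩ int T`, so the two gradients have the same
tangential component, while the flux condition with `A₁ ≤ A₂` gives
`|g₂·n| ≤ |g₁·n| = (A₂/A₁) |g₂·n|`. Hence `‖g₂‖ ≤ ‖∇w‖ ≤ ‖g₁‖ ≤ (A₂/A₁) ‖g₂‖` on all of `T`:
the edge integral is at most `‖g₁‖² h_T`, the area integral is at least `‖g₂‖² π ρ²` (the
inscribed disc), and `h_T ≤ 1`, `h_T ≤ σ ρ` close the estimate with `C = (A₂/A₁)² σ²`.
-/

open MeasureTheory RealInnerProductSpace Filter Topology Metric ENNReal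

section Hyperplane

variable {E : Type*} [NormedAddCommGroup E] [InnerProductSpace ℝ E]

lemma inner_eq_inner_of_eqOn_hyperplane {U : Set E} (hU : IsOpen U) {x₀ n g₁ g₂ v : E}
    {b₁ b₂ c : ℝ} (hx₀ : x₀ ∈ U) (hx₀c : ⟪x₀, n⟫ = c)
    (heq : ∀ x ∈ U, ⟪x, n⟫ = c → ⟪g₁, x⟫ + b₁ = ⟪g₂, x⟫ + b₂) (hv : ⟪v, n⟫ = 0) :
    ⟪g₁, v⟫ = ⟪g₂, v⟫ := by
  have hU' : ∀ᶠ t : ℝ in 𝓝[≠] 0, x₀ + t • v ∈ U := by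
    refine nhdsWithin_le_nhds ((Continuous.tendsto (by fun_prop) 0).eventually ?_)
    simpa using hU.mem_nhds hx₀
  obtain ⟨t, htU, ht⟩ := (hU'.and self_mem_nhdsWithin).exists
  have hline : ⟪x₀ + t • v, n⟫ = c := by
    rw [inner_add_left, real_inner_smul_left, hv, mul_zero, add_zero, hx₀c]
  have h₀ := heq x₀ hx₀ hx₀c
  have h₁ := heq _ htU hline
  rw [inner_add_right, inner_add_right, real_inner_smul_right, real_inner_smul_right] at h₁
  exact mul_left_cancel₀ (show t ≠ 0 from ht) (by linarith)

variable {n : E}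

lemma norm_sq_eq_inner_sq_add_norm_sq_sub (hn : ‖n‖ = 1) (g : E) :
    ‖g‖ ^ 2 = ⟪g, n⟫ ^ 2 + ‖g - ⟪g, n⟫ • n‖ ^ 2 := by
  rw [norm_sub_sq_real, real_inner_smul_right, norm_smul, hn, mul_one, Real.norm_eq_abs, sq_abs]
  ring

lemma sub_inner_smul_eq_of_eqOn_hyperplane {U : Set E} (hU : IsOpen U) {x₀ g₁ g₂ : E}
    {b₁ b₂ c : ℝ} (hn : ‖n‖ = 1) (hx₀ : x₀ ∈ U) (hx₀c : ⟪x₀, n⟫ = c)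
    (heq : ∀ x ∈ U, ⟪x, n⟫ = c → ⟪g₁, x⟫ + b₁ = ⟪g₂, x⟫ + b₂) :
    g₁ - ⟪g₁, n⟫ • n = g₂ - ⟪g₂, n⟫ • n := by
  have hnn : ⟪n, n⟫ = 1 := by rw [real_inner_self_eq_norm_sq, hn, one_pow]
  set d := g₁ - ⟪g₁, n⟫ • n - (g₂ - ⟪g₂, n⟫ • n)
  have hd : d = (g₁ - g₂) - (⟪g₁, n⟫ - ⟪g₂, n⟫) • n := by simp only [d, sub_smul]; abel
  have hdn : ⟪d, n⟫ = 0 := by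
    rw [hd, inner_sub_left, inner_sub_left, real_inner_smul_left, hnn]; ring
  have hgd := inner_eq_inner_of_eqOn_hyperplane hU hx₀ hx₀c heq hdn
  have hdd : ⟪d, d⟫ = 0 :=
    calc ⟪d, d⟫ = ⟪g₁, d⟫ - ⟪g₂, d⟫ - (⟪g₁, n⟫ - ⟪g₂, n⟫) * ⟪n, d⟫ := by
          rw [← inner_sub_left, ← real_inner_smul_left, ← inner_sub_left, ← hd]
      _ = 0 := by rw [hgd, real_inner_comm d n, hdn]; ring
  exact sub_eq_zero.1 (inner_self_eq_zero.1 hdd)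

lemma norm_sq_le_of_flux (hn : ‖n‖ = 1) {g₁ g₂ : E}
    (htan : g₁ - ⟪g₁, n⟫ • n = g₂ - ⟪g₂, n⟫ • n) {A₁ A₂ : ℝ} (hA₁ : 0 < A₁) (hA : A₁ ≤ A₂)
    (hflux : A₁ * ⟪g₁, n⟫ = A₂ * ⟪g₂, n⟫) :
    ‖g₂‖ ≤ ‖g₁‖ ∧ ‖g₁‖ ^ 2 ≤ (A₂ / A₁) ^ 2 * ‖g₂‖ ^ 2 := by
  have hnormal : ⟪g₁, n⟫ = A₂ / A₁ * ⟪g₂, n⟫ := by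
    rw [div_mul_eq_mul_div, eq_div_iff hA₁.ne']; linarith
  have hK : 1 ≤ A₂ / A₁ := (one_le_div hA₁).2 hA
  have h₁ := norm_sq_eq_inner_sq_add_norm_sq_sub hn g₁
  have h₂ := norm_sq_eq_inner_sq_add_norm_sq_sub hn g₂
  have hK₂ : 1 ≤ (A₂ / A₁) ^ 2 := one_le_pow₀ hK
  rw [htan, hnormal, mul_pow] at h₁
  refine ⟨pow_le_pow_iff_left₀ (norm_nonneg _) (norm_nonneg _) two_ne_zero |>.1 ?_, ?_⟩
  · nlinarith [mul_le_mul_of_nonneg_right hK₂ (sq_nonneg ⟪g₂, n⟫)]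
  · nlinarith [mul_le_mul_of_nonneg_right hK₂ (sq_nonneg ‖g₂ - ⟪g₂, n⟫ • n‖)]

end Hyperplane

lemma setIntegral_segment_hausdorff_le {E : Type*} [NormedAddCommGroup E] [NormedSpace ℝ E]
    [MeasurableSpace E] [BorelSpace E] {f : E → ℝ} {M : ℝ} {a b : E}
    (hf : ∀ x ∈ segment ℝ a b, ‖f x‖ ≤ M) :
    ∫ x in segment ℝ a b, f x ∂μH[1] ≤ M * dist a b := by
  have h := norm_setIntegral_le_of_norm_le_const
    (by rw [hausdorffMeasure_segment]; exact edist_lt_top a b) hf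
  rw [Measure.real, hausdorffMeasure_segment, ← dist_edist] at h
  exact (le_abs_self _).trans h

lemma mul_measureReal_le_setIntegral_norm_sq_ite {X E : Type*} [MeasurableSpace X]
    [NormedAddCommGroup E] {μ : Measure X} {s : Set X} (hs : MeasurableSet s) (hμs : μ s ≠ ∞)
    {p : X → Prop} [DecidablePred p] (hp : MeasurableSet {x | p x}) {a b : E}
    (hab : ‖b‖ ≤ ‖a‖) :
    ‖b‖ ^ 2 * μ.real s ≤ ∫ x in s, ‖if p x then a else b‖ ^ 2 ∂μ := by
  have hite : (fun x => ‖if p x then a else b‖ ^ 2) = fun x => if p x then ‖a‖ ^ 2 else ‖b‖ ^ 2 :=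
    funext fun x => by split_ifs <;> rfl
  have hb : ∀ x, ‖b‖ ^ 2 ≤ ‖if p x then a else b‖ ^ 2 := fun x => by
    split_ifs
    · exact pow_le_pow_left₀ (norm_nonneg _) hab 2
    · exact le_rfl
  refine setIntegral_ge_of_const_le_real hs hμs (fun x _ => hb x) ?_
  refine .of_bound hμs.lt_top ?_ (‖a‖ ^ 2) (ae_of_all _ fun x => ?_)
  · rw [hite]; exact (Measurable.ite hp measurable_const measurable_const).aestronglyMeasurable
  · split_ifs <;> simp [pow_le_pow_left₀ (norm_nonneg _) hab 2]

lemma pi_mul_sq_le_volume_real_of_closedBall_subset {T : Set (EuclideanSpace ℝ (Fin 2))}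
    (hT : volume T ≠ ∞) {z : EuclideanSpace ℝ (Fin 2)} {ρ : ℝ} (hρ : 0 ≤ ρ)
    (hball : closedBall z ρ ⊆ T) : Real.pi * ρ ^ 2 ≤ volume.real T := by
  have h := measureReal_mono hball hT
  rwa [Measure.real, EuclideanSpace.volume_closedBall_fin_two, ← ENNReal.ofReal_pow hρ,
    ← ENNReal.ofReal_mul (by positivity), ENNReal.toReal_ofReal (by positivity), mul_comm] at h

lemma mul_le_of_shape_regular {h σ ρ K m M : ℝ} (hh : 0 < h) (hh₁ : h ≤ 1)
    (hσρ : h ≤ σ * ρ) (hK : 0 ≤ K) (hm : 0 ≤ m) (hM : M ≤ K * m) :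
    M * h ≤ K * σ ^ 2 * h⁻¹ ^ 2 * (m * (Real.pi * ρ ^ 2)) := by
  have h₃ : h ^ 3 ≤ (σ * ρ) ^ 2 :=
    (pow_le_pow_of_le_one hh.le hh₁ (by norm_num)).trans (pow_le_pow_left₀ hh.le hσρ 2)
  have hπ : 1 ≤ Real.pi := by linarith [Real.pi_gt_three]
  rw [inv_pow, ← div_eq_mul_inv, div_mul_eq_mul_div, le_div_iff₀ (by positivity)]
  calc M * h * h ^ 2 ≤ K * m * h ^ 3 := by
        rw [show M * h * h ^ 2 = M * h ^ 3 by ring]; gcongr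
    _ ≤ K * m * (σ * ρ) ^ 2 * 1 := by rw [mul_one]; gcongr
    _ ≤ K * m * (σ * ρ) ^ 2 * Real.pi := by gcongr
    _ = K * σ ^ 2 * (m * (Real.pi * ρ ^ 2)) := by ring

/-- Trace/inverse inequality for degree-one immersed finite element functions on an
interface triangle (Lemma 4.1): there is `C = C(σ, A₂/A₁)`, independent of the triangle
`T`, the cutting line `L` and the function `w`, such that for every shape-regular
triangle `T` of diameter `h_T ≤ 1` cut by a line `L = {x : ⟪x, n⟫ = c}` into two pieces,
and every continuous piecewise-affine `w` on `T` satisfying the flux condition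
`A₁ ∇w₁·n = A₂ ∇w₂·n`, every edge `e` of `T` satisfies
`∫_e ‖∇w‖² dH¹ ≤ C h_T⁻² ∫_T ‖∇w‖² dx`. -/
theorem stmt_1 (A₁ A₂ σ : ℝ) (hA₁ : 0 < A₁) (hA : A₁ ≤ A₂) (hσ : 1 ≤ σ) :
    ∃ C > 0, ∀ (P : Fin 3 → EuclideanSpace ℝ (Fin 2)), AffineIndependent ℝ P →
      ∀ T : Set (EuclideanSpace ℝ (Fin 2)), T = convexHull ℝ (Set.range P) →
      Metric.diam T ≤ 1 →
      -- shape regularity: an inscribed closed ball of radius `ρ` with `h_T ≤ σ ρ`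
      (∀ (z : EuclideanSpace ℝ (Fin 2)) (ρ : ℝ), Metric.closedBall z ρ ⊆ T →
        Metric.diam T ≤ σ * ρ →
      -- the line `L = {x : ⟪x, n⟫ = c}`, with unit normal `n`, meets the interior of
      -- `T`, cutting it into the two pieces `{x ∈ T : ⟪x, n⟫ < c}` (the piece `T₁`)
      -- and `{x ∈ T : ⟪x, n⟫ > c}` (the piece `T₂`)
      ∀ (n : EuclideanSpace ℝ (Fin 2)) (c : ℝ), ‖n‖ = 1 →
        (∃ x ∈ interior T, ⟪x, n⟫ = c) →
      -- `w` is continuous on `T` and affine on the closure of each piece, with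
      -- one-sided gradients `g₁` (on `T₁`) and `g₂` (on `T₂`)
      ∀ (w : EuclideanSpace ℝ (Fin 2) → ℝ) (g₁ g₂ : EuclideanSpace ℝ (Fin 2)) (b₁ b₂ : ℝ),
        ContinuousOn w T →
        (∀ x ∈ T, ⟪x, n⟫ ≤ c → w x = ⟪g₁, x⟫ + b₁) →
        (∀ x ∈ T, c ≤ ⟪x, n⟫ → w x = ⟪g₂, x⟫ + b₂) →
        -- the flux condition `A₁ ∇w₁ · n = A₂ ∇w₂ · n`
        A₁ * ⟪g₁, n⟫ = A₂ * ⟪g₂, n⟫ →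
      -- conclusion, for every edge `e = [P i, P j]` of `T`
      ∀ i j : Fin 3, i ≠ j →
        (∫ x in segment ℝ (P i) (P j),
            ‖(if ⟪x, n⟫ ≤ c then g₁ else g₂)‖ ^ 2 ∂μH[1]) ≤
          C * (Metric.diam T)⁻¹ ^ 2 *
            ∫ x in T, ‖(if ⟪x, n⟫ ≤ c then g₁ else g₂)‖ ^ 2) := by
  have hA₂ : 0 < A₂ := hA₁.trans_le hA
  have hσ₀ : 0 < σ := zero_lt_one.trans_le hσ
  refine ⟨(A₂ / A₁) ^ 2 * σ ^ 2, by positivity, ?_⟩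
  intro P hP T hT hdiam z ρ hball hσρ n c hn ⟨x₀, hx₀, hx₀c⟩ w g₁ g₂ b₁ b₂ _ hw₁ hw₂ hflux
    i j hij
  have hTc : IsCompact T := hT ▸ (Set.finite_range P).isCompact_convexHull (𝕜 := ℝ)
  have hPT : ∀ k, P k ∈ T := fun k => hT ▸ subset_convexHull ℝ _ ⟨k, rfl⟩
  have hedge : dist (P i) (P j) ≤ diam T := dist_le_diam_of_mem hTc.isBounded (hPT i) (hPT j)
  have hh : 0 < diam T := (dist_pos.2 (hP.injective.ne hij)).trans_le hedge
  have hρ : 0 < ρ := pos_of_mul_pos_right (hh.trans_le hσρ) hσ₀.le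
  have htan := sub_inner_smul_eq_of_eqOn_hyperplane isOpen_interior hn hx₀ hx₀c
    fun x hx hxc =>
      (hw₁ x (interior_subset hx) hxc.le).symm.trans (hw₂ x (interior_subset hx) hxc.ge)
  obtain ⟨h₂₁, h₁₂⟩ := norm_sq_le_of_flux hn htan hA₁ hA hflux
  have hhalf : MeasurableSet {x : EuclideanSpace ℝ (Fin 2) | ⟪x, n⟫ ≤ c} :=
    (isClosed_le (by fun_prop) continuous_const).measurableSet
  calc _ ≤ ‖g₁‖ ^ 2 * diam T := by
        refine (setIntegral_segment_hausdorff_le fun x _ => ?_).trans (by gcongr)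
        split_ifs <;> simp [pow_le_pow_left₀ (norm_nonneg _) h₂₁ 2]
    _ ≤ (A₂ / A₁) ^ 2 * σ ^ 2 * (diam T)⁻¹ ^ 2 * (‖g₂‖ ^ 2 * (Real.pi * ρ ^ 2)) :=
        mul_le_of_shape_regular hh hdiam hσρ (by positivity) (sq_nonneg _) h₁₂
    _ ≤ _ := by
        gcongr
        exact (mul_le_mul_of_nonneg_left (pi_mul_sq_le_volume_real_of_closedBall_subset
          hTc.measure_lt_top.ne hρ.le hball) (sq_nonneg _)).trans
          (mul_measureReal_le_setIntegral_norm_sq_ite hTc.measurableSet hTc.measure_lt_top.ne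
            hhalf h₂₁)
end

section
/- Adopt the single-element weak Galerkin setup: T ⊂ ℝ² is an open triangle; V₀ is a finite-dimensional space of functions that are C¹ on a neighborhood of the closure of T; G = {∇v : v ∈ V₀}, regarded as a finite-dimensional subspace of L²(T; ℝ²); B is a finite-dimensional subspace of L²(∂T, H¹); Q₀ is the orthogonal projection of L²(T) onto V₀; Q_b is the orthogonal projection of L²(∂T) onto B; 𝒬 is the orthogonal projection of L²(T; ℝ²) onto G; and for v₀ ∈ V₀, v_b ∈ B the discrete weak gradient ∇_w(v₀, v_b) is the unique element of G satisfying (∇_w(v₀,v_b), q)_{L²(T)} = (∇v₀, q)_{L²(T)} - ⟨Q_b(v₀|_{∂T}) - v_b, q·n⟩_{L²(∂T)} for all q ∈ G, where n is the outward unit normal of T. Then for every function u of class C¹ on a neighborhood of the closure of T and every q ∈ G: (∇_w(Q₀u, Q_b(u|_{∂T})), q)_{L²(T)} = (𝒬(∇u), q)_{L²(T)} + (∇(Q₀u) - ∇u, q)_{L²(T)} - ⟨Q_b((Q₀u)|_{∂T}) - Q_b(u|_{∂T}), q·n⟩_{L²(∂T)}. -/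
open MeasureTheory RealInnerProductSpace

theorem ContDiffOn.continuousOn_gradient {E : Type*} [NormedAddCommGroup E]
    [InnerProductSpace ℝ E] [CompleteSpace E] {f : E → ℝ} {W : Set E}
    (hf : ContDiffOn ℝ 1 f W) (hW : IsOpen W) :
    ContinuousOn (gradient f) W :=
  (InnerProductSpace.toDual ℝ E).symm.continuous.comp_continuousOn
    (hf.continuousOn_fderiv_of_isOpen hW le_rfl)

theorem ContinuousOn.integrableOn_inner_of_subset_compact {X E : Type*}
    [TopologicalSpace X] [T2Space X] [MeasurableSpace X] [OpensMeasurableSpace X]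
    [NormedAddCommGroup E] [InnerProductSpace ℝ E]
    {μ : Measure X} [IsFiniteMeasureOnCompacts μ] {f g : X → E} {s K : Set X}
    (hf : ContinuousOn f K) (hg : ContinuousOn g K) (hK : IsCompact K) (hsK : s ⊆ K) :
    IntegrableOn (fun x => ⟪f x, g x⟫) s μ :=
  ((hf.inner hg).integrableOn_compact hK).mono_set hsK

theorem setIntegral_inner_eq_add_of_integral_inner_sub_eq_zero {X E : Type*}
    [MeasurableSpace X] [NormedAddCommGroup E] [InnerProductSpace ℝ E]
    {μ : Measure X} {s : Set X} {a b p q : X → E}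
    (hp : IntegrableOn (fun x => ⟪p x, q x⟫) s μ)
    (hab : IntegrableOn (fun x => ⟪a x - b x, q x⟫) s μ)
    (hbp : IntegrableOn (fun x => ⟪b x - p x, q x⟫) s μ)
    (horth : ∫ x in s, ⟪b x - p x, q x⟫ ∂μ = 0) :
    ∫ x in s, ⟪a x, q x⟫ ∂μ = (∫ x in s, ⟪p x, q x⟫ ∂μ) + ∫ x in s, ⟪a x - b x, q x⟫ ∂μ := by
  have hsplit : (fun x => ⟪a x, q x⟫) =
      fun x => (⟪p x, q x⟫ + ⟪a x - b x, q x⟫) + ⟪b x - p x, q x⟫ := by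
    funext x
    simp only [inner_sub_left]
    ring
  rw [hsplit, integral_add (by exact hp.add hab) hbp, integral_add hp hab, horth, add_zero]

theorem stmt_9_general
    (P : Fin 3 → EuclideanSpace ℝ (Fin 2))
    (T : Set (EuclideanSpace ℝ (Fin 2))) (hT : T = interior (convexHull ℝ (Set.range P)))
    -- `V₀`: a finite-dimensional space of functions `C¹` on a neighborhood `W` of `cl T`
    (V₀ : Submodule ℝ (EuclideanSpace ℝ (Fin 2) → ℝ))
    (W : Set (EuclideanSpace ℝ (Fin 2))) (hW : IsOpen W) (hTW : closure T ⊆ W)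
    (hV₀C1 : ∀ v ∈ V₀, ContDiffOn ℝ 1 v W)
    -- `ν`: the outward unit normal of `T` on `∂T`
    (ν : EuclideanSpace ℝ (Fin 2) → EuclideanSpace ℝ (Fin 2))
    -- `u`: of class `C¹` on the neighborhood `W` of `cl T`
    (u : EuclideanSpace ℝ (Fin 2) → ℝ) (hu : ContDiffOn ℝ 1 u W)
    -- `u₀ = Q₀ u`: the `L²(T)`-orthogonal projection of `u` onto `V₀`
    (u₀ : EuclideanSpace ℝ (Fin 2) → ℝ) (hu₀ : u₀ ∈ V₀)
    -- `ub = Q_b(u|_{∂T})`: the `L²(∂T, H¹)`-orthogonal projection of `u` onto `B`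
    (ub : EuclideanSpace ℝ (Fin 2) → ℝ)
    -- `u0b = Q_b(u₀|_{∂T})`: the projection of `u₀` onto `B`
    (u0b : EuclideanSpace ℝ (Fin 2) → ℝ)
    -- `p = 𝒬(∇u)`: the `L²(T; ℝ²)`-orthogonal projection of `∇u` onto `G = ∇V₀`
    (p : EuclideanSpace ℝ (Fin 2) → EuclideanSpace ℝ (Fin 2))
    (hpG : ∃ v ∈ V₀, p = fun x => gradient v x)
    (hpproj : ∀ v ∈ V₀, ∫ x in T, ⟪gradient u x - p x, gradient v x⟫ = 0)
    -- `g = ∇_w(u₀, ub)`: the discrete weak gradient, defined by its relation on `G`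
    (g : EuclideanSpace ℝ (Fin 2) → EuclideanSpace ℝ (Fin 2))
    (hgdef : ∀ v ∈ V₀,
      (∫ x in T, ⟪g x, gradient v x⟫) =
        (∫ x in T, ⟪gradient u₀ x, gradient v x⟫)
          - ∫ x in frontier T, (u0b x - ub x) * ⟪gradient v x, ν x⟫ ∂μH[1]) :
    ∀ v ∈ V₀,
      (∫ x in T, ⟪g x, gradient v x⟫) =
        (∫ x in T, ⟪p x, gradient v x⟫)
          + (∫ x in T, ⟪gradient u₀ x - gradient u x, gradient v x⟫)
          - ∫ x in frontier T, (u0b x - ub x) * ⟪gradient v x, ν x⟫ ∂μH[1] := by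
  intro v hv
  have hK : IsCompact (closure T) :=
    ((Set.finite_range P).isCompact_convexHull (𝕜 := ℝ)).closure_of_subset
      (hT ▸ interior_subset)
  have hgrad : ∀ w ∈ V₀, ContinuousOn (gradient w) (closure T) := fun w hw =>
    ((hV₀C1 w hw).continuousOn_gradient hW).mono hTW
  have hgu : ContinuousOn (gradient u) (closure T) := (hu.continuousOn_gradient hW).mono hTW
  have hp : ContinuousOn p (closure T) := by
    obtain ⟨w, hw, rfl⟩ := hpG
    exact hgrad w hw
  have hint : ∀ {f h : EuclideanSpace ℝ (Fin 2) → EuclideanSpace ℝ (Fin 2)},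
      ContinuousOn f (closure T) → ContinuousOn h (closure T) →
      IntegrableOn (fun x => ⟪f x, h x⟫) T := fun hf hh =>
    hf.integrableOn_inner_of_subset_compact hh hK subset_closure
  rw [hgdef v hv, setIntegral_inner_eq_add_of_integral_inner_sub_eq_zero (b := gradient u)
    (hint hp (hgrad v hv)) (hint ((hgrad u₀ hu₀).sub hgu) (hgrad v hv))
    (hint (hgu.sub hp) (hgrad v hv)) (hpproj v hv)]

/-- Commuting (exchange) property of the discrete weak gradient (Lemma 5.1).
`T` is an open triangle, `V₀` a finite-dimensional space of functions `C¹` on a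
neighborhood of `cl T`, `G = {∇v : v ∈ V₀}`, `B` a finite-dimensional boundary space,
`ν` the outward unit normal of `T`.  With `u₀ = Q₀u`, `ub = Q_b(u|_{∂T})`,
`u0b = Q_b(u₀|_{∂T})`, `p = 𝒬(∇u)` and `g = ∇_w(Q₀u, Q_b u)` characterized by the
orthogonality/defining relations (all projections formulated via `L²` orthogonality
relations, boundary integrals with respect to `H¹`), one has, for every `q = ∇v ∈ G`:
`(∇_w Q_h u, q)_T = (𝒬∇u, q)_T + (∇(Q₀u) - ∇u, q)_T - ⟨Q_b(Q₀u) - Q_b u, q·ν⟩_{∂T}`. -/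
theorem stmt_9
    (P : Fin 3 → EuclideanSpace ℝ (Fin 2)) (hP : AffineIndependent ℝ P)
    (T : Set (EuclideanSpace ℝ (Fin 2))) (hT : T = interior (convexHull ℝ (Set.range P)))
    -- `V₀`: a finite-dimensional space of functions `C¹` on a neighborhood `W` of `cl T`
    (V₀ : Submodule ℝ (EuclideanSpace ℝ (Fin 2) → ℝ)) (hV₀fin : FiniteDimensional ℝ V₀)
    (W : Set (EuclideanSpace ℝ (Fin 2))) (hW : IsOpen W) (hTW : closure T ⊆ W)
    (hV₀C1 : ∀ v ∈ V₀, ContDiffOn ℝ 1 v W)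
    -- `B`: a finite-dimensional boundary space
    (B : Submodule ℝ (EuclideanSpace ℝ (Fin 2) → ℝ)) (hBfin : FiniteDimensional ℝ B)
    -- `ν`: the outward unit normal of `T` on `∂T`
    (ν : EuclideanSpace ℝ (Fin 2) → EuclideanSpace ℝ (Fin 2))
    -- `u`: of class `C¹` on the neighborhood `W` of `cl T`
    (u : EuclideanSpace ℝ (Fin 2) → ℝ) (hu : ContDiffOn ℝ 1 u W)
    -- `u₀ = Q₀ u`: the `L²(T)`-orthogonal projection of `u` onto `V₀`
    (u₀ : EuclideanSpace ℝ (Fin 2) → ℝ) (hu₀ : u₀ ∈ V₀)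
    (hu₀proj : ∀ v ∈ V₀, ∫ x in T, (u x - u₀ x) * v x = 0)
    -- `ub = Q_b(u|_{∂T})`: the `L²(∂T, H¹)`-orthogonal projection of `u` onto `B`
    (ub : EuclideanSpace ℝ (Fin 2) → ℝ) (hub : ub ∈ B)
    (hubproj : ∀ b ∈ B, ∫ x in frontier T, (u x - ub x) * b x ∂μH[1] = 0)
    -- `u0b = Q_b(u₀|_{∂T})`: the projection of `u₀` onto `B`
    (u0b : EuclideanSpace ℝ (Fin 2) → ℝ) (hu0b : u0b ∈ B)
    (hu0bproj : ∀ b ∈ B, ∫ x in frontier T, (u₀ x - u0b x) * b x ∂μH[1] = 0)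
    -- `p = 𝒬(∇u)`: the `L²(T; ℝ²)`-orthogonal projection of `∇u` onto `G = ∇V₀`
    (p : EuclideanSpace ℝ (Fin 2) → EuclideanSpace ℝ (Fin 2))
    (hpG : ∃ v ∈ V₀, p = fun x => gradient v x)
    (hpproj : ∀ v ∈ V₀, ∫ x in T, ⟪gradient u x - p x, gradient v x⟫ = 0)
    -- `g = ∇_w(u₀, ub)`: the discrete weak gradient, defined by its relation on `G`
    (g : EuclideanSpace ℝ (Fin 2) → EuclideanSpace ℝ (Fin 2))
    (hgG : ∃ v ∈ V₀, g = fun x => gradient v x)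
    (hgdef : ∀ v ∈ V₀,
      (∫ x in T, ⟪g x, gradient v x⟫) =
        (∫ x in T, ⟪gradient u₀ x, gradient v x⟫)
          - ∫ x in frontier T, (u0b x - ub x) * ⟪gradient v x, ν x⟫ ∂μH[1]) :
    ∀ v ∈ V₀,
      (∫ x in T, ⟪g x, gradient v x⟫) =
        (∫ x in T, ⟪p x, gradient v x⟫)
          + (∫ x in T, ⟪gradient u₀ x - gradient u x, gradient v x⟫)
          - ∫ x in frontier T, (u0b x - ub x) * ⟪gradient v x, ν x⟫ ∂μH[1] :=
  stmt_9_general P T hT V₀ W hW hTW hV₀C1 ν u hu u₀ hu₀ ub u0b p hpG hpproj g hgdef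
end
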